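/- Assume β₁ = 1 + α² + δ₁ + δ₂ and β₁ < (1 + α√(δ₁/δ₂))². Then for every integer n with |n| ≥ 2, the polynomial P_n(λ) = λ² + (β(n) − β₁)λ + γ(n) − n²δ₂β₁ has no purely imaginary roots (including 0). -/

import Mathlib

/-!
On the imaginary axis a real quadratic `z² + B z + C` takes the value `(C - t²) + B t i`, so it has
no root there as soon as `B ≠ 0` and `C ≠ 0`. For `P_n` one has `B = (n² - 1)(δ₁ + δ₂) > 0`, and with
`s = √(δ₁/δ₂)`, i.e. `s² δ₂ = δ₁`, the hypothesis `β₁ < (1 + α s)²` gives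
`C > n⁴ δ₁ δ₂ + α² - 2 n² α s δ₂ = (n² s δ₂ - α)² ≥ 0`.
-/

open Complex

theorem quadratic_ofReal_ne_zero_of_imaginary {B C : ℝ} (hB : B ≠ 0) (hC : C ≠ 0) (t : ℝ) :
    ((t : ℂ) * I) ^ 2 + (B : ℂ) * ((t : ℂ) * I) + (C : ℂ) ≠ 0 := by
  intro h
  have him : B * t = 0 := by simpa [sq] using congrArg im h
  have ht : t = 0 := (mul_eq_zero.mp him).resolve_left hB
  subst ht
  exact hC (by simpa using h)

theorem gamma_sub_mul_beta_pos {δ₁ δ₂ α β m : ℝ} (hδ₁ : 0 ≤ δ₁) (hδ₂ : 0 < δ₂) (hm : 0 < m)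
    (hβ : β < (1 + α * Real.sqrt (δ₁ / δ₂)) ^ 2) :
    0 < m * δ₂ + m * δ₁ * α ^ 2 + m ^ 2 * δ₁ * δ₂ + α ^ 2 - m * δ₂ * β := by
  set s := Real.sqrt (δ₁ / δ₂)
  have hs : s ^ 2 * δ₂ = δ₁ := by
    rw [Real.sq_sqrt (div_nonneg hδ₁ hδ₂.le)]
    field_simp
  have hβ' : m * δ₂ * β < m * δ₂ * (1 + α * s) ^ 2 := mul_lt_mul_of_pos_left hβ (by positivity)
  have hsq : m * δ₂ * (1 + α * s) ^ 2 + (m * s * δ₂ - α) ^ 2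
      = m * δ₂ + m * δ₁ * α ^ 2 + m ^ 2 * δ₁ * δ₂ + α ^ 2 := by
    rw [← hs]; ring
  linarith [sq_nonneg (m * s * δ₂ - α)]

theorem stmt_5_general (δ₁ δ₂ α : ℝ) (hδ₁ : 0 < δ₁) (hδ₂ : 0 < δ₂)
    (β₁ : ℝ) (hβ₁ : β₁ = 1 + α ^ 2 + δ₁ + δ₂)
    (hass : β₁ < (1 + α * Real.sqrt (δ₁ / δ₂)) ^ 2)
    (n : ℤ) (hn : 2 ≤ |n|) :
    ∀ t : ℝ,
      ((t : ℂ) * Complex.I) ^ 2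
          + ((1 + α ^ 2 + (n : ℝ) ^ 2 * (δ₁ + δ₂) - β₁ : ℝ) : ℂ) * ((t : ℂ) * Complex.I)
          + (((n : ℝ) ^ 2 * δ₂ + (n : ℝ) ^ 2 * δ₁ * α ^ 2 + (n : ℝ) ^ 4 * δ₁ * δ₂
              + α ^ 2 - (n : ℝ) ^ 2 * δ₂ * β₁ : ℝ) : ℂ)
        ≠ 0 := by
  have hn2 : (4 : ℝ) ≤ (n : ℝ) ^ 2 := by
    have : (2 : ℝ) ≤ |(n : ℝ)| := by exact_mod_cast hn
    nlinarith [sq_abs (n : ℝ)]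
  refine quadratic_ofReal_ne_zero_of_imaginary ?_ ?_
  · have hB : 1 + α ^ 2 + (n : ℝ) ^ 2 * (δ₁ + δ₂) - β₁ = ((n : ℝ) ^ 2 - 1) * (δ₁ + δ₂) := by
      rw [hβ₁]; ring
    rw [hB]
    exact (mul_pos (by linarith) (by linarith)).ne'
  · have hC := gamma_sub_mul_beta_pos hδ₁.le hδ₂ (by positivity : (0 : ℝ) < (n : ℝ) ^ 2) hass
    rw [← pow_mul] at hC
    exact hC.ne'

/-- With `β₁ = 1 + α² + δ₁ + δ₂ < (1 + α√(δ₁/δ₂))²`, for every integer `n` with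
`|n| ≥ 2`, the polynomial `P_n(λ) = λ² + (β(n) − β₁)λ + γ(n) − n²δ₂β₁` has no
purely imaginary roots (including 0). -/
theorem stmt_5 (δ₁ δ₂ α : ℝ) (hδ₁ : 0 < δ₁) (hδ₂ : 0 < δ₂) (hα : 0 < α)
    (β₁ : ℝ) (hβ₁ : β₁ = 1 + α ^ 2 + δ₁ + δ₂)
    (hass : β₁ < (1 + α * Real.sqrt (δ₁ / δ₂)) ^ 2)
    (n : ℤ) (hn : 2 ≤ |n|) :
    ∀ t : ℝ,
      ((t : ℂ) * Complex.I) ^ 2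
          + ((1 + α ^ 2 + (n : ℝ) ^ 2 * (δ₁ + δ₂) - β₁ : ℝ) : ℂ) * ((t : ℂ) * Complex.I)
          + (((n : ℝ) ^ 2 * δ₂ + (n : ℝ) ^ 2 * δ₁ * α ^ 2 + (n : ℝ) ^ 4 * δ₁ * δ₂
              + α ^ 2 - (n : ℝ) ^ 2 * δ₂ * β₁ : ℝ) : ℂ)
        ≠ 0 :=
  stmt_5_general δ₁ δ₂ α hδ₁ hδ₂ β₁ hβ₁ hass n hn
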